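/- The bipartite mixed state ρ^{AB} = (1/4)(|10⟩⟨10| + |10⟩⟨01| + |01⟩⟨10| + |01⟩⟨01| + |12⟩⟨12| + |12⟩⟨21| + |21⟩⟨12| + |21⟩⟨21|) on C³ ⊗ C³, obtained by tracing out the qubit from the pure state |ψ⟩ = (1/2)(|0,1,0⟩ + |0,0,1⟩ + |1,1,2⟩ + |1,2,1⟩) ∈ C² ⊗ C³ ⊗ C³, is not separable. Hence this pure 2 × 3 × 3 tripartite state is robust against the loss of the qubit. -/

import Mathlib

/-!
The reduced state is computed entrywise. Non-separability is the Peres criterion: partial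
transposition of the first factor sends `A ⊗ₖ B` to `Aᵀ ⊗ₖ B`, which is again positive
semidefinite, so the partial transpose of a separable state is positive semidefinite; that of
`ρ^{AB}` has a negative expectation value.
-/

open scoped Kronecker ComplexConjugate ComplexOrder Matrix

noncomputable section

/-- A density matrix: positive semidefinite with trace 1. -/
def IsDensity {n : Type} [Fintype n] [DecidableEq n] (ρ : Matrix n n ℂ) : Prop :=
  ρ.PosSemidef ∧ ρ.trace = 1

/-- Separability of a bipartite density matrix: a finite convex combination of
tensor (Kronecker) products of density matrices. -/
def Separable {n m : Type} [Fintype n] [DecidableEq n] [Fintype m] [DecidableEq m]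
    (ρ : Matrix (n × m) (n × m) ℂ) : Prop :=
  ∃ (L : ℕ) (p : Fin L → ℝ) (A : Fin L → Matrix n n ℂ) (B : Fin L → Matrix m m ℂ),
    (∀ i, 0 < p i) ∧ (∑ i, p i) = 1 ∧ (∀ i, IsDensity (A i)) ∧ (∀ i, IsDensity (B i)) ∧
    ρ = ∑ i, (p i : ℂ) • (A i ⊗ₖ B i)

/-- Partial trace over the first tensor factor. -/
def ptraceFst {k n : Type} [Fintype k] (ρ : Matrix (k × n) (k × n) ℂ) : Matrix n n ℂ :=
  fun i j => ∑ a, ρ (a, i) (a, j)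

/-- Partial trace over the second tensor factor. -/
def ptraceSnd {n m : Type} [Fintype m] (ρ : Matrix (n × m) (n × m) ℂ) : Matrix n n ℂ :=
  fun i j => ∑ b, ρ (i, b) (j, b)

/-- The rank-one projection |ψ⟩⟨ψ|. -/
def proj {n : Type} (ψ : n → ℂ) : Matrix n n ℂ := Matrix.vecMulVec ψ (star ψ)

/-- Partial transpose with respect to the first tensor factor. -/
def ptransposeFst {n m : Type} (ρ : Matrix (n × m) (n × m) ℂ) : Matrix (n × m) (n × m) ℂ :=
  fun x y => ρ (y.1, x.2) (x.1, y.2)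

/-- The ket-bra |v⟩⟨w|. -/
def ketbra {n : Type} (v w : n → ℂ) : Matrix n n ℂ := Matrix.vecMulVec v (star w)

/-- Standard basis vector |a,i,j⟩ of ℂ² ⊗ ℂ³ ⊗ ℂ³. -/
def ket233 (a : Fin 2) (i j : Fin 3) : Fin 2 × (Fin 3 × Fin 3) → ℂ :=
  fun x => if x = (a, (i, j)) then 1 else 0

/-- Standard basis vector |i,j⟩ of ℂ³ ⊗ ℂ³. -/
def ket33 (i j : Fin 3) : Fin 3 × Fin 3 → ℂ :=
  fun x => if x = (i, j) then 1 else 0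

open Matrix

section PartialTranspose

variable {n m : Type}

lemma ptransposeFst_kronecker (A : Matrix n n ℂ) (B : Matrix m m ℂ) :
    ptransposeFst (A ⊗ₖ B) = Aᵀ ⊗ₖ B :=
  rfl

lemma ptransposeFst_sum_smul {ι : Type} (s : Finset ι) (c : ι → ℂ)
    (ρ : ι → Matrix (n × m) (n × m) ℂ) :
    ptransposeFst (∑ i ∈ s, c i • ρ i) = ∑ i ∈ s, c i • ptransposeFst (ρ i) := by
  ext x y
  simp [ptransposeFst, Matrix.sum_apply]

theorem Separable.posSemidef_ptransposeFst [Fintype n] [DecidableEq n] [Fintype m]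
    [DecidableEq m] {ρ : Matrix (n × m) (n × m) ℂ} (h : Separable ρ) :
    (ptransposeFst ρ).PosSemidef := by
  obtain ⟨L, p, A, B, hp, -, hA, hB, rfl⟩ := h
  rw [ptransposeFst_sum_smul]
  refine posSemidef_sum _ fun i _ => ?_
  rw [ptransposeFst_kronecker]
  exact ((hA i).1.transpose.kronecker (hB i).1).smul (by exact_mod_cast (hp i).le)

end PartialTranspose

def psi : Fin 2 × (Fin 3 × Fin 3) → ℂ := fun x => (1 / 2 : ℂ) *
  (ket233 0 1 0 x + ket233 0 0 1 x + ket233 1 1 2 x + ket233 1 2 1 x)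

def rhoAB : Matrix (Fin 3 × Fin 3) (Fin 3 × Fin 3) ℂ := (1 / 4 : ℂ) •
  (ketbra (ket33 1 0) (ket33 1 0) + ketbra (ket33 1 0) (ket33 0 1) +
   ketbra (ket33 0 1) (ket33 1 0) + ketbra (ket33 0 1) (ket33 0 1) +
   ketbra (ket33 1 2) (ket33 1 2) + ketbra (ket33 1 2) (ket33 2 1) +
   ketbra (ket33 2 1) (ket33 1 2) + ketbra (ket33 2 1) (ket33 2 1))

lemma rhoAB_eq_ptraceFst_proj_psi : rhoAB = ptraceFst (proj psi) := by
  ext ⟨i, j⟩ ⟨k, l⟩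
  simp only [rhoAB, psi, ptraceFst, proj, ketbra, vecMulVec_apply, Matrix.smul_apply,
    Matrix.add_apply, Pi.star_apply, ket33, ket233, Fin.sum_univ_two, smul_eq_mul]
  fin_cases i <;> fin_cases j <;> fin_cases k <;> fin_cases l <;>
    norm_num [Prod.ext_iff, Fin.ext_iff, Complex.star_def]

/-- The witness `|00⟩ - |11⟩` picks up the coherences `⟨10|ρ|01⟩ = ⟨01|ρ|10⟩ = 1/4` while the
diagonal entries `⟨00|ρ|00⟩` and `⟨11|ρ|11⟩` vanish. -/
lemma not_posSemidef_ptransposeFst_rhoAB : ¬ (ptransposeFst rhoAB).PosSemidef := by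
  intro h
  have hneg : star (ket33 0 0 - ket33 1 1) ⬝ᵥ
      (ptransposeFst rhoAB *ᵥ (ket33 0 0 - ket33 1 1)) = -1 / 2 := by
    simp only [ptransposeFst, mulVec, dotProduct, Fintype.sum_prod_type, Fin.sum_univ_three,
      rhoAB, ketbra, ket33, vecMulVec_apply, Matrix.smul_apply, Matrix.add_apply,
      Pi.star_apply, Pi.sub_apply, smul_eq_mul]
    norm_num [Prod.ext_iff, Fin.ext_iff]
  have := h.dotProduct_mulVec_nonneg (ket33 0 0 - ket33 1 1)
  rw [hneg] at this
  norm_num [Complex.le_def] at this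

/-- The bipartite mixed state
`ρ^{AB} = (1/4)(|10⟩⟨10|+|10⟩⟨01|+|01⟩⟨10|+|01⟩⟨01|+|12⟩⟨12|+|12⟩⟨21|+|21⟩⟨12|+|21⟩⟨21|)`
on `ℂ³ ⊗ ℂ³` is the qubit-loss residual state of
`|ψ⟩ = (|0,1,0⟩+|0,0,1⟩+|1,1,2⟩+|1,2,1⟩)/2` and is not separable; hence this pure
`2 × 3 × 3` state is robust against the loss of the qubit. -/
theorem stmt10
    (ψ : Fin 2 × (Fin 3 × Fin 3) → ℂ)
    (hψ : ψ = fun x => (1 / 2 : ℂ) *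
      (ket233 0 1 0 x + ket233 0 0 1 x + ket233 1 1 2 x + ket233 1 2 1 x))
    (ρAB : Matrix (Fin 3 × Fin 3) (Fin 3 × Fin 3) ℂ)
    (hρAB : ρAB = (1 / 4 : ℂ) •
      (ketbra (ket33 1 0) (ket33 1 0) + ketbra (ket33 1 0) (ket33 0 1) +
       ketbra (ket33 0 1) (ket33 1 0) + ketbra (ket33 0 1) (ket33 0 1) +
       ketbra (ket33 1 2) (ket33 1 2) + ketbra (ket33 1 2) (ket33 2 1) +
       ketbra (ket33 2 1) (ket33 1 2) + ketbra (ket33 2 1) (ket33 2 1))) :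
    ρAB = ptraceFst (proj ψ) ∧ ¬ Separable ρAB := by
  subst hψ hρAB
  exact ⟨rhoAB_eq_ptraceFst_proj_psi,
    fun h => not_posSemidef_ptransposeFst_rhoAB h.posSemidef_ptransposeFst⟩
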